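/- Let û_i = β̂_i·x_i + w_i for arms i in group P_2 and û_i = β̂_i·x_i + w_i − ψ̂_1·x_i + b_{1,i} + ψ̂_2·x_i + b_{2,i} for arms i in group P_1. Assume |β̂_i·x_i − (β_i·x_i + 1[i∈P_1] ψ·x_i)| ≤ w_i for all i, |ψ̂_1·x_i − ψ̄_1·x_i| ≤ b_{1,i}, |ψ̂_2·x_i − ψ̄_2·x_i| ≤ b_{2,i}, and ψ̄_1·x_i − ψ̄_2·x_i = ψ·x_i for the biased group. Then for every arm i, β_i·x_i ≤ û_i ≤ β_i·x_i + 2(w_i + b_{1,i} + b_{2,i}), so the true unbiased reward of the arm a = argmax û satisfies f(x_{i*}) − f(x_a) ≤ 2(w_a + b_{1,a} + b_{2,a}) + 2(w_{i*} + b_{1,i*} + b_{2,i*}). -/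

import Mathlib

/-!
Each index `û_i` brackets the true reward: the confidence widths absorb the estimation errors, and
for the biased group the bias `ψ·x_i` inside `β̂_i·x_i` is cancelled by the estimate
`ψ̂_1·x_i - ψ̂_2·x_i` of `ψ̄_1·x_i - ψ̄_2·x_i = ψ·x_i`. Then, as for any optimistic index,
`f(i*) ≤ û_{i*} ≤ û_a ≤ f(a) + 2 (w_a + b_{1,a} + b_{2,a})`.
-/

lemma le_ucb_and_ucb_le_of_abs_sub_le {f est w b1 b2 : ℝ} (h : |est - f| ≤ w)
    (hb1 : 0 ≤ b1) (hb2 : 0 ≤ b2) :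
    f ≤ est + w ∧ est + w ≤ f + 2 * (w + b1 + b2) := by
  obtain ⟨hlo, hhi⟩ := abs_le.mp h
  constructor <;> linarith

lemma le_debiased_ucb_and_debiased_ucb_le
    {f bias est est1 est2 true1 true2 w b1 b2 : ℝ}
    (h : |est - (f + bias)| ≤ w) (h1 : |est1 - true1| ≤ b1) (h2 : |est2 - true2| ≤ b2)
    (hbias : true1 - true2 = bias) :
    f ≤ est + w - est1 + b1 + est2 + b2 ∧
      est + w - est1 + b1 + est2 + b2 ≤ f + 2 * (w + b1 + b2) := by
  obtain ⟨hlo, hhi⟩ := abs_le.mp h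
  obtain ⟨h1lo, h1hi⟩ := abs_le.mp h1
  obtain ⟨h2lo, h2hi⟩ := abs_le.mp h2
  constructor <;> linarith

lemma sub_le_of_forall_le_ucb {ι : Type*} {f u c : ι → ℝ}
    (hbracket : ∀ i, f i ≤ u i ∧ u i ≤ f i + 2 * c i) {a : ι} (ha : ∀ i, u i ≤ u a) (j : ι) :
    f j - f a ≤ 2 * c a :=
  calc f j - f a ≤ u a - f a := by linarith [(hbracket j).1, ha j]
    _ ≤ 2 * c a := by linarith [(hbracket a).2]

theorem stmt17_general (n d : ℕ) (P1 : Finset (Fin n))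
    (β βhat : Fin n → Fin d → ℝ) (x : Fin n → Fin d → ℝ)
    (ψ ψb1 ψb2 ψhat1 ψhat2 : Fin d → ℝ)
    (w b1 b2 uhat : Fin n → ℝ)
    (huhat1 : ∀ i ∈ P1, uhat i = dotProduct (βhat i) (x i) + w i
      - dotProduct ψhat1 (x i) + b1 i + dotProduct ψhat2 (x i) + b2 i)
    (huhat2 : ∀ i ∉ P1, uhat i = dotProduct (βhat i) (x i) + w i)
    (hβ : ∀ i, |dotProduct (βhat i) (x i) -
      (dotProduct (β i) (x i) +
        (if i ∈ P1 then dotProduct ψ (x i) else 0))| ≤ w i)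
    (hψ1 : ∀ i, |dotProduct ψhat1 (x i) - dotProduct ψb1 (x i)| ≤ b1 i)
    (hψ2 : ∀ i, |dotProduct ψhat2 (x i) - dotProduct ψb2 (x i)| ≤ b2 i)
    (hbias : ∀ i ∈ P1, dotProduct ψb1 (x i) - dotProduct ψb2 (x i)
      = dotProduct ψ (x i))
    (istar a : Fin n)
    (ha : ∀ i, uhat i ≤ uhat a) :
    (∀ i, dotProduct (β i) (x i) ≤ uhat i ∧
      uhat i ≤ dotProduct (β i) (x i) + 2 * (w i + b1 i + b2 i)) ∧
    dotProduct (β istar) (x istar) - dotProduct (β a) (x a) ≤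
      2 * (w a + b1 a + b2 a) + 2 * (w istar + b1 istar + b2 istar) := by
  have hbracket : ∀ i, dotProduct (β i) (x i) ≤ uhat i ∧
      uhat i ≤ dotProduct (β i) (x i) + 2 * (w i + b1 i + b2 i) := by
    intro i
    by_cases hi : i ∈ P1
    · rw [huhat1 i hi]
      have hβi := hβ i
      rw [if_pos hi] at hβi
      exact le_debiased_ucb_and_debiased_ucb_le hβi (hψ1 i) (hψ2 i) (hbias i hi)
    · rw [huhat2 i hi]
      have hβi := hβ i
      rw [if_neg hi, add_zero] at hβi
      exact le_ucb_and_ucb_le_of_abs_sub_le hβi ((abs_nonneg _).trans (hψ1 i))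
        ((abs_nonneg _).trans (hψ2 i))
  refine ⟨hbracket, ?_⟩
  have hregret := sub_le_of_forall_le_ucb hbracket ha istar
  have hw := (abs_nonneg _).trans (hβ istar)
  have hb1 := (abs_nonneg _).trans (hψ1 istar)
  have hb2 := (abs_nonneg _).trans (hψ2 istar)
  linarith

theorem stmt17 (n d : ℕ) (P1 : Finset (Fin n))
    (β βhat : Fin n → Fin d → ℝ) (x : Fin n → Fin d → ℝ)
    (ψ ψb1 ψb2 ψhat1 ψhat2 : Fin d → ℝ)
    (w b1 b2 uhat : Fin n → ℝ)
    (hw0 : ∀ i, 0 ≤ w i) (hb10 : ∀ i, 0 ≤ b1 i) (hb20 : ∀ i, 0 ≤ b2 i)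
    (huhat1 : ∀ i ∈ P1, uhat i = dotProduct (βhat i) (x i) + w i
      - dotProduct ψhat1 (x i) + b1 i + dotProduct ψhat2 (x i) + b2 i)
    (huhat2 : ∀ i ∉ P1, uhat i = dotProduct (βhat i) (x i) + w i)
    (hβ : ∀ i, |dotProduct (βhat i) (x i) -
      (dotProduct (β i) (x i) +
        (if i ∈ P1 then dotProduct ψ (x i) else 0))| ≤ w i)
    (hψ1 : ∀ i, |dotProduct ψhat1 (x i) - dotProduct ψb1 (x i)| ≤ b1 i)
    (hψ2 : ∀ i, |dotProduct ψhat2 (x i) - dotProduct ψb2 (x i)| ≤ b2 i)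
    (hbias : ∀ i ∈ P1, dotProduct ψb1 (x i) - dotProduct ψb2 (x i)
      = dotProduct ψ (x i))
    (istar a : Fin n)
    (histar : ∀ i, dotProduct (β i) (x i) ≤ dotProduct (β istar) (x istar))
    (ha : ∀ i, uhat i ≤ uhat a) :
    (∀ i, dotProduct (β i) (x i) ≤ uhat i ∧
      uhat i ≤ dotProduct (β i) (x i) + 2 * (w i + b1 i + b2 i)) ∧
    dotProduct (β istar) (x istar) - dotProduct (β a) (x a) ≤
      2 * (w a + b1 a + b2 a) + 2 * (w istar + b1 istar + b2 istar) :=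
  stmt17_general n d P1 β βhat x ψ ψb1 ψb2 ψhat1 ψhat2 w b1 b2 uhat huhat1 huhat2 hβ hψ1 hψ2 hbias
    istar a ha
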